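/- Among the four standard representatives of unitary 4×4 R-matrices in dimension 2, crossing symmetry (S^{αβ}_{δγ} = S^{δα}_{γβ}) holds exactly in the following cases: R₁ = q·I is never crossing symmetric for q ∈ 𝕋 (dim 2); R₂ = diag-type matrix with entries p,q,r,s (with R₂(e₁⊗e₂) = r e₂⊗e₁, R₂(e₂⊗e₁) = q e₁⊗e₂, R₂(e₁⊗e₁) = p e₁⊗e₁, R₂(e₂⊗e₂) = s e₂⊗e₂) is crossing symmetric iff q = r; R₃ (with R₃(e₁⊗e₁) = r e₂⊗e₂, R₃(e₂⊗e₂) = p e₁⊗e₁, R₃(e₁⊗e₂) = q e₁⊗e₂, R₃(e₂⊗e₁) = q e₂⊗e₁) is crossing symmetric iff p = q = r; and R₄ = (q/√2)·(matrix with 2×2 blocks [[1,1],[−1,1]] and [[1,−1],[1,1]]) is never crossing symmetric. -/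

import Mathlib

/-! In `R₁` and `R₄` crossing symmetry equates an entry that is a nonzero multiple of `q`
with a vanishing one, forcing `q = 0`, which is impossible on the unit circle. In `R₂` and
`R₃` the entry relations it imposes are exactly the stated equalities of parameters. -/

open Matrix

/-- Crossing symmetry `S^{αβ}_{δγ} = S^{δα}_{γβ}`, with matrix elements
`S^{αβ}_{δγ} = ⟨e_α ⊗ e_β, S (e_δ ⊗ e_γ)⟩`. -/
def CrossingSymmetric (S : Matrix (Fin 2 × Fin 2) (Fin 2 × Fin 2) ℂ) : Prop :=
  ∀ a b c d : Fin 2, S (a, b) (d, c) = S (d, a) (c, b)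

/-- `R₁ = q·I`. -/
noncomputable def Rmat1 (q : ℂ) : Matrix (Fin 2 × Fin 2) (Fin 2 × Fin 2) ℂ := q • 1

/-- `R₂`: `R₂(e₁⊗e₁) = p e₁⊗e₁`, `R₂(e₁⊗e₂) = r e₂⊗e₁`, `R₂(e₂⊗e₁) = q e₁⊗e₂`,
`R₂(e₂⊗e₂) = s e₂⊗e₂`. -/
def Rmat2 (p q r s : ℂ) : Matrix (Fin 2 × Fin 2) (Fin 2 × Fin 2) ℂ :=
  Matrix.of fun x y =>
    if x = (0, 0) ∧ y = (0, 0) then p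
    else if x = (1, 0) ∧ y = (0, 1) then r
    else if x = (0, 1) ∧ y = (1, 0) then q
    else if x = (1, 1) ∧ y = (1, 1) then s
    else 0

/-- `R₃`: `R₃(e₁⊗e₁) = r e₂⊗e₂`, `R₃(e₂⊗e₂) = p e₁⊗e₁`, `R₃(e₁⊗e₂) = q e₁⊗e₂`,
`R₃(e₂⊗e₁) = q e₂⊗e₁`. -/
def Rmat3 (p q r : ℂ) : Matrix (Fin 2 × Fin 2) (Fin 2 × Fin 2) ℂ :=
  Matrix.of fun x y =>
    if x = (1, 1) ∧ y = (0, 0) then r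
    else if x = (0, 0) ∧ y = (1, 1) then p
    else if x = (0, 1) ∧ y = (0, 1) then q
    else if x = (1, 0) ∧ y = (1, 0) then q
    else 0

/-- `R₄ = (q/√2) ·` the block matrix with `2×2` blocks `[[1,1],[−1,1]]` and
`[[1,−1],[1,1]]` (in the lexicographic basis `e₁⊗e₁, e₁⊗e₂, e₂⊗e₁, e₂⊗e₂`). -/
noncomputable def Rmat4 (q : ℂ) : Matrix (Fin 2 × Fin 2) (Fin 2 × Fin 2) ℂ :=
  (q / (Real.sqrt 2 : ℂ)) •
    Matrix.of (fun x y =>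
      if x = (0, 0) ∧ y = (0, 0) then 1
      else if x = (0, 0) ∧ y = (0, 1) then 1
      else if x = (0, 1) ∧ y = (0, 0) then -1
      else if x = (0, 1) ∧ y = (0, 1) then 1
      else if x = (1, 0) ∧ y = (1, 0) then 1
      else if x = (1, 0) ∧ y = (1, 1) then -1
      else if x = (1, 1) ∧ y = (1, 0) then 1
      else if x = (1, 1) ∧ y = (1, 1) then 1
      else (0 : ℂ))

theorem crossingSymmetric_Rmat1_iff (q : ℂ) : CrossingSymmetric (Rmat1 q) ↔ q = 0 := by
  refine ⟨fun h => ?_, fun hq => ?_⟩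
  · simpa [Rmat1, Matrix.one_apply, eq_comm] using h 0 0 1 1
  · simp [CrossingSymmetric, Rmat1, hq]

theorem crossingSymmetric_Rmat2_iff (p q r s : ℂ) : CrossingSymmetric (Rmat2 p q r s) ↔ q = r := by
  refine ⟨fun h => by simpa [Rmat2] using h 0 1 0 1, ?_⟩
  rintro rfl a b c d
  fin_cases a <;> fin_cases b <;> fin_cases c <;> fin_cases d <;> simp [Rmat2]

theorem crossingSymmetric_Rmat3_iff (p q r : ℂ) :
    CrossingSymmetric (Rmat3 p q r) ↔ p = q ∧ q = r := by
  refine ⟨fun h => ⟨by simpa [Rmat3] using h 0 0 1 1,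
    by simpa [Rmat3, eq_comm] using h 1 1 0 0⟩, ?_⟩
  rintro ⟨rfl, rfl⟩ a b c d
  fin_cases a <;> fin_cases b <;> fin_cases c <;> fin_cases d <;> simp [Rmat3]

theorem crossingSymmetric_Rmat4_iff (q : ℂ) : CrossingSymmetric (Rmat4 q) ↔ q = 0 := by
  refine ⟨fun h => by simpa [Rmat4] using h 0 0 1 0, fun hq => ?_⟩
  simp [CrossingSymmetric, Rmat4, hq]

/-- among the four standard representatives of unitary R-matrices in
dimension 2, crossing symmetry holds exactly as follows: `R₁` never (for `q ∈ 𝕋`),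
`R₂` iff `q = r`, `R₃` iff `p = q = r`, and `R₄` never (for `q ∈ 𝕋`). -/
theorem statement19 :
    (∀ q : ℂ, ‖q‖ = 1 → ¬ CrossingSymmetric (Rmat1 q)) ∧
    (∀ p q r s : ℂ, ‖p‖ = 1 → ‖q‖ = 1 → ‖r‖ = 1 → ‖s‖ = 1 →
      (CrossingSymmetric (Rmat2 p q r s) ↔ q = r)) ∧
    (∀ p q r : ℂ, ‖q‖ = 1 → ‖p * r‖ = 1 →
      (CrossingSymmetric (Rmat3 p q r) ↔ (p = q ∧ q = r))) ∧
    (∀ q : ℂ, ‖q‖ = 1 → ¬ CrossingSymmetric (Rmat4 q)) := by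
  have ne_zero_of_norm_eq_one {z : ℂ} (hz : ‖z‖ = 1) : z ≠ 0 :=
    norm_ne_zero_iff.mp (hz ▸ one_ne_zero)
  refine ⟨fun q hq => ?_, fun p q r s _ _ _ _ => crossingSymmetric_Rmat2_iff p q r s,
    fun p q r _ _ => crossingSymmetric_Rmat3_iff p q r, fun q hq => ?_⟩
  · rw [crossingSymmetric_Rmat1_iff]
    exact ne_zero_of_norm_eq_one hq
  · rw [crossingSymmetric_Rmat4_iff]
    exact ne_zero_of_norm_eq_one hq
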